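/- Let p : M̃ → M be the universal cover of a path-connected, locally path-connected space M with π₁(M) ≅ ℤ/kℤ finite, and let a connected compact group G act on M with a fixed point x₀. Then the G-action lifts to a G-action on M̃, and the fixed point set of the lifted action is the full preimage p⁻¹(Fix(M; G)). -/

import Mathlib

/-! Since `M'` is simply connected and locally path-connected, each map `g • p` lifts uniquely to
a map `σ g` fixing a chosen point `e₀` over the stationary point, and uniqueness of lifts makes
`σ` an action. For `x` over a fixed point, `g ↦ σ g x` is continuous (it is the endpoint of a
lifted homotopy) and takes values in the discrete fibre over `p x`; as `G` is connected it is
constant, equal to `σ 1 x = x`. -/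

open Topology

variable {E X : Type*} [TopologicalSpace E] [TopologicalSpace X] {p : E → X}

theorem IsLocalHomeomorph.locallyPathConnectedSpace [LocallyPathConnectedSpace X]
    (hp : IsLocalHomeomorph p) : LocallyPathConnectedSpace E := by
  choose φ hxφ _ using hp
  refine .of_bases (p := fun x s ↦ s ∈ 𝓝 (φ x x) ∧ IsPathConnected s ∧ s ⊆ (φ x).target)
    (s := fun x s ↦ (φ x).symm '' s) (fun x ↦ ?_) fun x s ⟨_, hs, hsφ⟩ ↦
    hs.image' ((φ x).continuousOn_symm.mono hsφ)
  have basis := (pathConnected_subset_basis (φ x).open_target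
    ((φ x).map_source (hxφ x))).map (φ x).symm
  rwa [(φ x).symm.map_nhds_eq ((φ x).map_source (hxφ x)), (φ x).left_inv (hxφ x)] at basis

namespace IsCoveringMap

section liftSMul

variable [SimplyConnectedSpace E] [LocallyPathConnectedSpace E] (hp : IsCoveringMap p)
  {G : Type*} [Monoid G] [MulAction G X] [ContinuousConstSMul G X]
  {e₀ : E} (hfix : ∀ g : G, g • p e₀ = p e₀)

noncomputable def liftSMul (g : G) : C(E, E) :=
  (hp.existsUnique_continuousMap_lifts ⟨fun x ↦ g • p x, hp.continuous.const_smul g⟩ e₀ e₀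
    (hfix g).symm).exists.choose

variable {hp hfix} in
theorem eq_liftSMul_iff {g : G} {F : C(E, E)} :
    F = hp.liftSMul hfix g ↔ F e₀ = e₀ ∧ p ∘ F = fun x ↦ g • p x := by
  have lift := hp.existsUnique_continuousMap_lifts
    ⟨fun x ↦ g • p x, hp.continuous.const_smul g⟩ e₀ e₀ (hfix g).symm
  exact ⟨fun hF ↦ hF ▸ lift.exists.choose_spec, fun hF ↦ lift.unique hF lift.exists.choose_spec⟩

theorem liftSMul_apply_basepoint (g : G) : hp.liftSMul hfix g e₀ = e₀ :=
  (eq_liftSMul_iff.mp rfl).1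

theorem proj_liftSMul_apply (g : G) (x : E) : p (hp.liftSMul hfix g x) = g • p x :=
  congr_fun (eq_liftSMul_iff.mp rfl).2 x

theorem liftSMul_one : hp.liftSMul hfix 1 = ContinuousMap.id E :=
  eq_comm.mp <| eq_liftSMul_iff.mpr ⟨rfl, funext fun x ↦ (one_smul G (p x)).symm⟩

theorem liftSMul_mul (g h : G) :
    hp.liftSMul hfix (g * h) = (hp.liftSMul hfix g).comp (hp.liftSMul hfix h) :=
  eq_comm.mp <| eq_liftSMul_iff.mpr ⟨by simp [liftSMul_apply_basepoint],
    funext fun x ↦ by simp [proj_liftSMul_apply, mul_smul]⟩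

theorem continuous_liftSMul_apply [TopologicalSpace G] [ContinuousSMul G X] (x : E) :
    Continuous fun g : G ↦ hp.liftSMul hfix g x := by
  let γ := PathConnectedSpace.somePath e₀ x
  let H : C(unitInterval × G, X) :=
    ⟨fun tg ↦ tg.2 • p (γ tg.1), by have := hp.continuous; fun_prop⟩
  have H_0 (g : G) : H (0, g) = p (ContinuousMap.const G e₀ g) := by simp [H, hfix]
  have hlift : (fun tg : unitInterval × G ↦ hp.liftSMul hfix tg.2 (γ tg.1)) =
      hp.liftHomotopy H (.const G e₀) H_0 := by
    refine (hp.eq_liftHomotopy_iff H_0 _).mpr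
      ⟨fun g ↦ ?_, funext fun tg ↦ proj_liftSMul_apply .., fun g ↦ ?_⟩
    · exact (hp.liftSMul hfix g).continuous.comp γ.continuous
    · simp [liftSMul_apply_basepoint]
  have hγ : ∀ g : G, hp.liftSMul hfix g x = hp.liftSMul hfix g (γ 1) := by simp
  simp_rw [hγ, congr_fun hlift (1, _)]
  fun_prop

theorem liftSMul_apply_eq_self_iff [TopologicalSpace G] [ContinuousSMul G X] [PreconnectedSpace G]
    (x : E) : (∀ g : G, hp.liftSMul hfix g x = x) ↔ ∀ g : G, g • p x = p x := by
  refine ⟨fun h g ↦ by rw [← proj_liftSMul_apply hp hfix, h], fun h g ↦ ?_⟩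
  calc hp.liftSMul hfix g x = hp.liftSMul hfix 1 x :=
        hp.const_of_comp (hp.continuous_liftSMul_apply hfix x)
          (fun g g' ↦ by rw [hp.proj_liftSMul_apply hfix, hp.proj_liftSMul_apply hfix, h, h]) g 1
    _ = x := DFunLike.congr_fun (hp.liftSMul_one hfix) x

end liftSMul

end IsCoveringMap

theorem bredon_lifting_of_group_action_general {M' M G : Type}
    [TopologicalSpace M'] [TopologicalSpace M]
    [LocallyPathConnectedSpace M] [SimplyConnectedSpace M']
    (p : M' → M) (hp : IsCoveringMap p) (hsurj : Function.Surjective p)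
    (x₀ : M)
    [TopologicalSpace G] [Group G] [ConnectedSpace G]
    [MulAction G M] [ContinuousSMul G M]
    (hfix : ∀ g : G, g • x₀ = x₀) :
    ∃ σ : G → M' → M',
      (∀ g, Continuous (σ g)) ∧
      (∀ x, σ 1 x = x) ∧
      (∀ g h x, σ (g * h) x = σ g (σ h x)) ∧
      (∀ g x, p (σ g x) = g • p x) ∧
      {x : M' | ∀ g : G, σ g x = x} = p ⁻¹' {m : M | ∀ g : G, g • m = m} := by
  obtain ⟨e₀, rfl⟩ := hsurj x₀
  have := hp.isLocalHomeomorph.locallyPathConnectedSpace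
  refine ⟨fun g ↦ hp.liftSMul hfix g, fun g ↦ (hp.liftSMul hfix g).continuous,
    fun x ↦ DFunLike.congr_fun (hp.liftSMul_one hfix) x,
    fun g h x ↦ DFunLike.congr_fun (hp.liftSMul_mul hfix g h) x,
    hp.proj_liftSMul_apply hfix, Set.ext fun x ↦ hp.liftSMul_apply_eq_self_iff hfix x⟩

/-- Bredon's lifting theorem (specialized): let `p : M' → M` be the universal cover of a
path-connected, locally path-connected space `M` whose fundamental group is isomorphic to
the finite cyclic group `ℤ/kℤ`, and let a compact connected topological group `G` act
continuously on `M` with a fixed point `x₀`.  Then the `G`-action lifts to a continuous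
`G`-action on `M'` covering the given action, and the fixed point set of the lifted action
is the full preimage of the fixed point set downstairs. -/
theorem bredon_lifting_of_group_action {M' M G : Type}
    [TopologicalSpace M'] [TopologicalSpace M]
    [PathConnectedSpace M] [LocallyPathConnectedSpace M] [SimplyConnectedSpace M']
    (p : M' → M) (hp : IsCoveringMap p) (hsurj : Function.Surjective p)
    (x₀ : M) (k : ℕ) (hk : 0 < k)
    (hπ₁ : Nonempty (FundamentalGroup M x₀ ≃* Multiplicative (ZMod k)))
    [TopologicalSpace G] [Group G] [IsTopologicalGroup G] [CompactSpace G] [ConnectedSpace G]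
    [MulAction G M] [ContinuousSMul G M]
    (hfix : ∀ g : G, g • x₀ = x₀) :
    ∃ σ : G → M' → M',
      (∀ g, Continuous (σ g)) ∧
      (∀ x, σ 1 x = x) ∧
      (∀ g h x, σ (g * h) x = σ g (σ h x)) ∧
      (∀ g x, p (σ g x) = g • p x) ∧
      {x : M' | ∀ g : G, σ g x = x} = p ⁻¹' {m : M | ∀ g : G, g • m = m} :=
  bredon_lifting_of_group_action_general p hp hsurj x₀ hfix
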